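/- For every Z₁ in the span of {u₁,...,u₄} and Z₂ in the span of {u₅,...,u₈} (an orthonormal basis of the second positive curl eigenspace E₂ on S³ with eigenvalue 3), there exists an isometry O of S³ of the block-rotation form diag(R(α), R(β)) such that O preserves B₁ (i.e., O_*B₁ = B₁), O_*Z₁ remains in span{u₁,...,u₄}, and O_*Z₂ lies in span{u₅, u₈} (its u₆ and u₇ components vanish). -/

import Mathlib

noncomputable section

/-- `ℝ⁴` with the Euclidean metric. -/
abbrev E4 := EuclideanSpace ℝ (Fin 4)

/-- The Hopf field `B₁(x) = (-x₂, x₁, -x₄, x₃)`. -/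
def hopfB1 (x : E4) : E4 := WithLp.toLp 2 ![-x 1, x 0, -x 3, x 2]

/-- The Hopf field `B₂(x) = (-x₃, x₄, x₁, -x₂)`. -/
def hopfB2 (x : E4) : E4 := WithLp.toLp 2 ![-x 2, x 3, x 0, -x 1]

/-- The Hopf field `B₃(x) = (-x₄, -x₃, x₂, x₁)`. -/
def hopfB3 (x : E4) : E4 := WithLp.toLp 2 ![-x 3, -x 2, x 1, x 0]

/-- The `L²`-orthonormal basis `u₁,…,u₈` of the curl eigenspace `E₂` of `S³`
(eigenvalue `3`). -/
def u2basis : Fin 8 → E4 → E4 :=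
  ![fun x => (Real.pi)⁻¹ • (x 0 • hopfB2 x - x 1 • hopfB3 x),
    fun x => (Real.pi)⁻¹ • (x 1 • hopfB2 x + x 0 • hopfB3 x),
    fun x => (Real.pi)⁻¹ • (x 2 • hopfB2 x - x 3 • hopfB3 x),
    fun x => (Real.pi)⁻¹ • (x 3 • hopfB2 x + x 2 • hopfB3 x),
    fun x => (Real.sqrt 3 * Real.pi)⁻¹ •
      (x 2 • hopfB2 x + x 3 • hopfB3 x - (2 * x 1) • hopfB1 x),
    fun x => (Real.sqrt 3 * Real.pi)⁻¹ •
      (-(x 3) • hopfB2 x + x 2 • hopfB3 x + (2 * x 0) • hopfB1 x),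
    fun x => (Real.sqrt 3 * Real.pi)⁻¹ •
      (x 1 • hopfB2 x - x 0 • hopfB3 x + (2 * x 2) • hopfB1 x),
    fun x => (Real.sqrt 3 * Real.pi)⁻¹ •
      (x 0 • hopfB2 x + x 1 • hopfB3 x + (2 * x 3) • hopfB1 x)]

/-- The block rotation `diag(R(α), R(β))` of `ℝ⁴`, acting on `(x₁,x₂)` by the rotation
of angle `α` and on `(x₃,x₄)` by the rotation of angle `β`; it restricts to an isometry
of `S³`. -/
def blockRot (α β : ℝ) (x : E4) : E4 :=
  WithLp.toLp 2 ![Real.cos α * x 0 + Real.sin α * x 1,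
    -Real.sin α * x 0 + Real.cos α * x 1,
    Real.cos β * x 2 + Real.sin β * x 3,
    -Real.sin β * x 2 + Real.cos β * x 3]

/-- The pushforward `O_*V` of a vector field `V` under the block rotation
`O = blockRot α β`: `(O_*V)(x) = O(V(O⁻¹x))`. -/
def pushRot (α β : ℝ) (V : E4 → E4) : E4 → E4 :=
  fun x => blockRot α β (V (blockRot (-α) (-β) x))

lemma u2b0 : u2basis 0 = fun x => (Real.pi)⁻¹ • (x 0 • hopfB2 x - x 1 • hopfB3 x) := rfl

lemma u2b1 : u2basis 1 = fun x => (Real.pi)⁻¹ • (x 1 • hopfB2 x + x 0 • hopfB3 x) := rfl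

lemma u2b2 : u2basis 2 = fun x => (Real.pi)⁻¹ • (x 2 • hopfB2 x - x 3 • hopfB3 x) := rfl

lemma u2b3 : u2basis 3 = fun x => (Real.pi)⁻¹ • (x 3 • hopfB2 x + x 2 • hopfB3 x) := rfl

lemma u2b4 : u2basis 4 = fun x => (Real.sqrt 3 * Real.pi)⁻¹ • (x 2 • hopfB2 x + x 3 • hopfB3 x - (2 * x 1) • hopfB1 x) := rfl

lemma u2b5 : u2basis 5 = fun x => (Real.sqrt 3 * Real.pi)⁻¹ • (-(x 3) • hopfB2 x + x 2 • hopfB3 x + (2 * x 0) • hopfB1 x) := rfl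

lemma u2b6 : u2basis 6 = fun x => (Real.sqrt 3 * Real.pi)⁻¹ • (x 1 • hopfB2 x - x 0 • hopfB3 x + (2 * x 2) • hopfB1 x) := rfl

lemma u2b7 : u2basis 7 = fun x => (Real.sqrt 3 * Real.pi)⁻¹ • (x 0 • hopfB2 x + x 1 • hopfB3 x + (2 * x 3) • hopfB1 x) := rfl

lemma pushRot_u0 (α β : ℝ) :
    pushRot α β (u2basis 0) = Real.cos (α+(α+β)) • u2basis 0 - Real.sin (α+(α+β)) • u2basis 1 := by
  funext x; ext i
  fin_cases i <;> simp only [pushRot, blockRot, hopfB1, hopfB2, hopfB3, u2b0, u2b1, u2b2, u2b3, u2b4, u2b5, u2b6, u2b7, Real.cos_neg, Real.sin_neg, Real.cos_add, Real.sin_add, WithLp.ofLp_toLp] <;> push_cast [Matrix.cons_val_zero, Matrix.cons_val_one, Matrix.head_cons, Matrix.cons_val_succ, Matrix.cons_val_two, Matrix.cons_val_three, Matrix.tail_cons, PiLp.smul_apply, PiLp.add_apply, PiLp.sub_apply, Pi.smul_apply, Pi.add_apply, Pi.sub_apply, smul_eq_mul]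
  · ring
  · ring
  · ring
  · ring

lemma pushRot_u1 (α β : ℝ) :
    pushRot α β (u2basis 1) = Real.sin (α+(α+β)) • u2basis 0 + Real.cos (α+(α+β)) • u2basis 1 := by
  funext x; ext i
  fin_cases i <;> simp only [pushRot, blockRot, hopfB1, hopfB2, hopfB3, u2b0, u2b1, u2b2, u2b3, u2b4, u2b5, u2b6, u2b7, Real.cos_neg, Real.sin_neg, Real.cos_add, Real.sin_add, WithLp.ofLp_toLp] <;> push_cast [Matrix.cons_val_zero, Matrix.cons_val_one, Matrix.head_cons, Matrix.cons_val_succ, Matrix.cons_val_two, Matrix.cons_val_three, Matrix.tail_cons, PiLp.smul_apply, PiLp.add_apply, PiLp.sub_apply, Pi.smul_apply, Pi.add_apply, Pi.sub_apply, smul_eq_mul]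
  · ring
  · ring
  · ring
  · ring

lemma pushRot_u2 (α β : ℝ) :
    pushRot α β (u2basis 2) = Real.cos (α+(β+β)) • u2basis 2 - Real.sin (α+(β+β)) • u2basis 3 := by
  funext x; ext i
  fin_cases i <;> simp only [pushRot, blockRot, hopfB1, hopfB2, hopfB3, u2b0, u2b1, u2b2, u2b3, u2b4, u2b5, u2b6, u2b7, Real.cos_neg, Real.sin_neg, Real.cos_add, Real.sin_add, WithLp.ofLp_toLp] <;> push_cast [Matrix.cons_val_zero, Matrix.cons_val_one, Matrix.head_cons, Matrix.cons_val_succ, Matrix.cons_val_two, Matrix.cons_val_three, Matrix.tail_cons, PiLp.smul_apply, PiLp.add_apply, PiLp.sub_apply, Pi.smul_apply, Pi.add_apply, Pi.sub_apply, smul_eq_mul]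
  · ring
  · ring
  · ring
  · ring

lemma pushRot_u3 (α β : ℝ) :
    pushRot α β (u2basis 3) = Real.sin (α+(β+β)) • u2basis 2 + Real.cos (α+(β+β)) • u2basis 3 := by
  funext x; ext i
  fin_cases i <;> simp only [pushRot, blockRot, hopfB1, hopfB2, hopfB3, u2b0, u2b1, u2b2, u2b3, u2b4, u2b5, u2b6, u2b7, Real.cos_neg, Real.sin_neg, Real.cos_add, Real.sin_add, WithLp.ofLp_toLp] <;> push_cast [Matrix.cons_val_zero, Matrix.cons_val_one, Matrix.head_cons, Matrix.cons_val_succ, Matrix.cons_val_two, Matrix.cons_val_three, Matrix.tail_cons, PiLp.smul_apply, PiLp.add_apply, PiLp.sub_apply, Pi.smul_apply, Pi.add_apply, Pi.sub_apply, smul_eq_mul]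
  · ring
  · ring
  · ring
  · ring

lemma pushRot_u4 (α β : ℝ) :
    pushRot α β (u2basis 4) = Real.cos α • u2basis 4 - Real.sin α • u2basis 5 := by
  funext x; ext i
  fin_cases i <;> simp only [pushRot, blockRot, hopfB1, hopfB2, hopfB3, u2b0, u2b1, u2b2, u2b3, u2b4, u2b5, u2b6, u2b7, Real.cos_neg, Real.sin_neg, Real.cos_add, Real.sin_add, WithLp.ofLp_toLp] <;> push_cast [Matrix.cons_val_zero, Matrix.cons_val_one, Matrix.head_cons, Matrix.cons_val_succ, Matrix.cons_val_two, Matrix.cons_val_three, Matrix.tail_cons, PiLp.smul_apply, PiLp.add_apply, PiLp.sub_apply, Pi.smul_apply, Pi.add_apply, Pi.sub_apply, smul_eq_mul]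
  · linear_combination ((Real.sqrt 3 * Real.pi)⁻¹ * (2 * Real.sin α * x 0 * x 1 + 2 * Real.cos α * x 1 ^ 2)) * Real.sin_sq_add_cos_sq α + ((Real.sqrt 3 * Real.pi)⁻¹ * (-Real.cos α * x 3 ^ 2 - Real.cos α * x 2 ^ 2)) * Real.sin_sq_add_cos_sq β
  · linear_combination ((Real.sqrt 3 * Real.pi)⁻¹ * (-2 * Real.sin α * x 0 ^ 2 - 2 * Real.cos α * x 0 * x 1)) * Real.sin_sq_add_cos_sq α + ((Real.sqrt 3 * Real.pi)⁻¹ * (Real.sin α * x 3 ^ 2 + Real.sin α * x 2 ^ 2)) * Real.sin_sq_add_cos_sq β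
  · linear_combination ((Real.sqrt 3 * Real.pi)⁻¹ * (-Real.sin α * x 1 * x 2 + 3 * Real.sin α * x 0 * x 3 + 3 * Real.cos α * x 1 * x 3 + Real.cos α * x 0 * x 2)) * Real.sin_sq_add_cos_sq β
  · linear_combination ((Real.sqrt 3 * Real.pi)⁻¹ * (-Real.sin α * x 1 * x 3 - 3 * Real.sin α * x 0 * x 2 - 3 * Real.cos α * x 1 * x 2 + Real.cos α * x 0 * x 3)) * Real.sin_sq_add_cos_sq β

lemma pushRot_u5 (α β : ℝ) :
    pushRot α β (u2basis 5) = Real.sin α • u2basis 4 + Real.cos α • u2basis 5 := by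
  funext x; ext i
  fin_cases i <;> simp only [pushRot, blockRot, hopfB1, hopfB2, hopfB3, u2b0, u2b1, u2b2, u2b3, u2b4, u2b5, u2b6, u2b7, Real.cos_neg, Real.sin_neg, Real.cos_add, Real.sin_add, WithLp.ofLp_toLp] <;> push_cast [Matrix.cons_val_zero, Matrix.cons_val_one, Matrix.head_cons, Matrix.cons_val_succ, Matrix.cons_val_two, Matrix.cons_val_three, Matrix.tail_cons, PiLp.smul_apply, PiLp.add_apply, PiLp.sub_apply, Pi.smul_apply, Pi.add_apply, Pi.sub_apply, smul_eq_mul]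
  · linear_combination ((Real.sqrt 3 * Real.pi)⁻¹ * (2 * Real.sin α * x 1 ^ 2 - 2 * Real.cos α * x 0 * x 1)) * Real.sin_sq_add_cos_sq α + ((Real.sqrt 3 * Real.pi)⁻¹ * (-Real.sin α * x 3 ^ 2 - Real.sin α * x 2 ^ 2)) * Real.sin_sq_add_cos_sq β
  · linear_combination ((Real.sqrt 3 * Real.pi)⁻¹ * (-2 * Real.sin α * x 0 * x 1 + 2 * Real.cos α * x 0 ^ 2)) * Real.sin_sq_add_cos_sq α + ((Real.sqrt 3 * Real.pi)⁻¹ * (-Real.cos α * x 3 ^ 2 - Real.cos α * x 2 ^ 2)) * Real.sin_sq_add_cos_sq β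
  · linear_combination ((Real.sqrt 3 * Real.pi)⁻¹ * (3 * Real.sin α * x 1 * x 3 + Real.sin α * x 0 * x 2 + Real.cos α * x 1 * x 2 - 3 * Real.cos α * x 0 * x 3)) * Real.sin_sq_add_cos_sq β
  · linear_combination ((Real.sqrt 3 * Real.pi)⁻¹ * (-3 * Real.sin α * x 1 * x 2 + Real.sin α * x 0 * x 3 + Real.cos α * x 1 * x 3 + 3 * Real.cos α * x 0 * x 2)) * Real.sin_sq_add_cos_sq β

lemma pushRot_u6 (α β : ℝ) :
    pushRot α β (u2basis 6) = Real.cos β • u2basis 6 - Real.sin β • u2basis 7 := by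
  funext x; ext i
  fin_cases i <;> simp only [pushRot, blockRot, hopfB1, hopfB2, hopfB3, u2b0, u2b1, u2b2, u2b3, u2b4, u2b5, u2b6, u2b7, Real.cos_neg, Real.sin_neg, Real.cos_add, Real.sin_add, WithLp.ofLp_toLp] <;> push_cast [Matrix.cons_val_zero, Matrix.cons_val_one, Matrix.head_cons, Matrix.cons_val_succ, Matrix.cons_val_two, Matrix.cons_val_three, Matrix.tail_cons, PiLp.smul_apply, PiLp.add_apply, PiLp.sub_apply, Pi.smul_apply, Pi.add_apply, Pi.sub_apply, smul_eq_mul]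
  · linear_combination ((Real.sqrt 3 * Real.pi)⁻¹ * (3 * Real.sin β * x 1 * x 3 + Real.sin β * x 0 * x 2 - 3 * Real.cos β * x 1 * x 2 + Real.cos β * x 0 * x 3)) * Real.sin_sq_add_cos_sq α
  · linear_combination ((Real.sqrt 3 * Real.pi)⁻¹ * (Real.sin β * x 1 * x 2 - 3 * Real.sin β * x 0 * x 3 + Real.cos β * x 1 * x 3 + 3 * Real.cos β * x 0 * x 2)) * Real.sin_sq_add_cos_sq α
  · linear_combination ((Real.sqrt 3 * Real.pi)⁻¹ * (-Real.sin β * x 1 ^ 2 - Real.sin β * x 0 ^ 2)) * Real.sin_sq_add_cos_sq α + ((Real.sqrt 3 * Real.pi)⁻¹ * (2 * Real.sin β * x 3 ^ 2 - 2 * Real.cos β * x 2 * x 3)) * Real.sin_sq_add_cos_sq β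
  · linear_combination ((Real.sqrt 3 * Real.pi)⁻¹ * (-Real.cos β * x 1 ^ 2 - Real.cos β * x 0 ^ 2)) * Real.sin_sq_add_cos_sq α + ((Real.sqrt 3 * Real.pi)⁻¹ * (-2 * Real.sin β * x 2 * x 3 + 2 * Real.cos β * x 2 ^ 2)) * Real.sin_sq_add_cos_sq β

lemma pushRot_u7 (α β : ℝ) :
    pushRot α β (u2basis 7) = Real.sin β • u2basis 6 + Real.cos β • u2basis 7 := by
  funext x; ext i
  fin_cases i <;> simp only [pushRot, blockRot, hopfB1, hopfB2, hopfB3, u2b0, u2b1, u2b2, u2b3, u2b4, u2b5, u2b6, u2b7, Real.cos_neg, Real.sin_neg, Real.cos_add, Real.sin_add, WithLp.ofLp_toLp] <;> push_cast [Matrix.cons_val_zero, Matrix.cons_val_one, Matrix.head_cons, Matrix.cons_val_succ, Matrix.cons_val_two, Matrix.cons_val_three, Matrix.tail_cons, PiLp.smul_apply, PiLp.add_apply, PiLp.sub_apply, Pi.smul_apply, Pi.add_apply, Pi.sub_apply, smul_eq_mul]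
  · linear_combination ((Real.sqrt 3 * Real.pi)⁻¹ * (-3 * Real.sin β * x 1 * x 2 + Real.sin β * x 0 * x 3 - 3 * Real.cos β * x 1 * x 3 - Real.cos β * x 0 * x 2)) * Real.sin_sq_add_cos_sq α
  · linear_combination ((Real.sqrt 3 * Real.pi)⁻¹ * (Real.sin β * x 1 * x 3 + 3 * Real.sin β * x 0 * x 2 - Real.cos β * x 1 * x 2 + 3 * Real.cos β * x 0 * x 3)) * Real.sin_sq_add_cos_sq α
  · linear_combination ((Real.sqrt 3 * Real.pi)⁻¹ * (Real.cos β * x 1 ^ 2 + Real.cos β * x 0 ^ 2)) * Real.sin_sq_add_cos_sq α + ((Real.sqrt 3 * Real.pi)⁻¹ * (-2 * Real.sin β * x 2 * x 3 - 2 * Real.cos β * x 3 ^ 2)) * Real.sin_sq_add_cos_sq β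
  · linear_combination ((Real.sqrt 3 * Real.pi)⁻¹ * (-Real.sin β * x 1 ^ 2 - Real.sin β * x 0 ^ 2)) * Real.sin_sq_add_cos_sq α + ((Real.sqrt 3 * Real.pi)⁻¹ * (2 * Real.sin β * x 2 ^ 2 + 2 * Real.cos β * x 2 * x 3)) * Real.sin_sq_add_cos_sq β

lemma pushRot_B1 (α β : ℝ) : pushRot α β hopfB1 = hopfB1 := by
  funext x; ext i
  fin_cases i <;> simp only [pushRot, blockRot, hopfB1, Real.cos_neg, Real.sin_neg, WithLp.ofLp_toLp] <;> push_cast [Matrix.cons_val_zero, Matrix.cons_val_one, Matrix.head_cons, Matrix.cons_val_succ, Matrix.cons_val_two, Matrix.cons_val_three, Matrix.tail_cons]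
  · linear_combination (-x 1) * Real.sin_sq_add_cos_sq α
  · linear_combination (x 0) * Real.sin_sq_add_cos_sq α
  · linear_combination (-x 3) * Real.sin_sq_add_cos_sq β
  · linear_combination (x 2) * Real.sin_sq_add_cos_sq β


lemma pushRot_smul_add (α β a : ℝ) (V W : E4 → E4) :
    pushRot α β (a • V + W) = a • pushRot α β V + pushRot α β W := by
  funext x; ext i
  fin_cases i <;>
    simp [pushRot, blockRot, Pi.smul_apply, Pi.add_apply, PiLp.smul_apply, PiLp.add_apply,
      smul_eq_mul, Matrix.cons_val_zero, Matrix.cons_val_one, Matrix.head_cons,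
      Matrix.cons_val_two, Matrix.cons_val_three, Matrix.tail_cons] <;> ring

lemma pushRot_smul (α β a : ℝ) (V : E4 → E4) :
    pushRot α β (a • V) = a • pushRot α β V := by
  funext x; ext i
  fin_cases i <;>
    simp [pushRot, blockRot, Pi.smul_apply, PiLp.smul_apply, smul_eq_mul,
      Matrix.cons_val_zero, Matrix.cons_val_one, Matrix.head_cons,
      Matrix.cons_val_two, Matrix.cons_val_three, Matrix.tail_cons] <;> ring

lemma pushRot_add (α β : ℝ) (V W : E4 → E4) :
    pushRot α β (V + W) = pushRot α β V + pushRot α β W := by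
  have := pushRot_smul_add α β 1 V W
  simpa using this

lemma pushRot_zero (α β : ℝ) : pushRot α β (0 : E4 → E4) = 0 := by
  have := pushRot_smul α β 0 0
  simpa using this

lemma exists_angle (p q : ℝ) : ∃ θ : ℝ, Real.sin θ * p = Real.cos θ * q := by
  by_cases hz : (Complex.I * q + p : ℂ) = 0
  · have hp : p = 0 := by
      have := congrArg Complex.re hz; simpa using this
    have hq : q = 0 := by
      have := congrArg Complex.im hz; simpa using this
    exact ⟨0, by simp [hp, hq]⟩
  · refine ⟨Complex.arg (Complex.I * q + p), ?_⟩
    have hre : (Complex.I * q + p : ℂ).re = p := by simp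
    have him : (Complex.I * q + p : ℂ).im = q := by simp
    rw [Complex.cos_arg hz, Complex.sin_arg, hre, him]
    ring

/-- For every `Z₁` in the span of `{u₁,…,u₄}` and `Z₂` in the span of `{u₅,…,u₈}`
(an orthonormal basis of the second positive curl eigenspace `E₂` of `S³`, eigenvalue
`3`), there exists an isometry `O` of `S³` of block-rotation form `diag(R(α), R(β))`
such that `O` preserves `B₁` (i.e. `O_*B₁ = B₁`), `O_*Z₁` remains in
`span{u₁,…,u₄}`, and `O_*Z₂` lies in `span{u₅, u₈}` (its `u₆`- and `u₇`-components
vanish). -/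
theorem exists_blockRot_normalizing_Z2
    (Z1 : E4 → E4)
    (hZ1 : Z1 ∈ Submodule.span ℝ
      ({u2basis 0, u2basis 1, u2basis 2, u2basis 3} : Set (E4 → E4)))
    (Z2 : E4 → E4)
    (hZ2 : Z2 ∈ Submodule.span ℝ
      ({u2basis 4, u2basis 5, u2basis 6, u2basis 7} : Set (E4 → E4))) :
    ∃ α β : ℝ,
      pushRot α β hopfB1 = hopfB1 ∧
      pushRot α β Z1 ∈ Submodule.span ℝ
        ({u2basis 0, u2basis 1, u2basis 2, u2basis 3} : Set (E4 → E4)) ∧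
      pushRot α β Z2 ∈ Submodule.span ℝ ({u2basis 4, u2basis 7} : Set (E4 → E4)) := by
  rw [Submodule.mem_span_insert] at hZ2
  obtain ⟨a, z1, hz1, rfl⟩ := hZ2
  rw [Submodule.mem_span_insert] at hz1
  obtain ⟨b, z2, hz2, rfl⟩ := hz1
  rw [Submodule.mem_span_insert] at hz2
  obtain ⟨c, z3, hz3, rfl⟩ := hz2
  rw [Submodule.mem_span_singleton] at hz3
  obtain ⟨d, rfl⟩ := hz3
  obtain ⟨α, hα⟩ := exists_angle a b
  obtain ⟨β, hβ⟩ := exists_angle d (-c)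
  refine ⟨α, β, pushRot_B1 α β, ?_, ?_⟩
  · -- Z1 part
    induction hZ1 using Submodule.span_induction with
    | mem V hV =>
      have h0 : u2basis 0 ∈ Submodule.span ℝ
          ({u2basis 0, u2basis 1, u2basis 2, u2basis 3} : Set (E4 → E4)) :=
        Submodule.subset_span (by simp)
      have h1 : u2basis 1 ∈ Submodule.span ℝ
          ({u2basis 0, u2basis 1, u2basis 2, u2basis 3} : Set (E4 → E4)) :=
        Submodule.subset_span (by simp)
      have h2 : u2basis 2 ∈ Submodule.span ℝ
          ({u2basis 0, u2basis 1, u2basis 2, u2basis 3} : Set (E4 → E4)) :=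
        Submodule.subset_span (by simp)
      have h3 : u2basis 3 ∈ Submodule.span ℝ
          ({u2basis 0, u2basis 1, u2basis 2, u2basis 3} : Set (E4 → E4)) :=
        Submodule.subset_span (by simp)
      rcases hV with rfl | rfl | rfl | rfl
      · rw [pushRot_u0]
        exact sub_mem (Submodule.smul_mem _ _ h0) (Submodule.smul_mem _ _ h1)
      · rw [pushRot_u1]
        exact add_mem (Submodule.smul_mem _ _ h0) (Submodule.smul_mem _ _ h1)
      · rw [pushRot_u2]
        exact sub_mem (Submodule.smul_mem _ _ h2) (Submodule.smul_mem _ _ h3)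
      · rw [pushRot_u3]
        exact add_mem (Submodule.smul_mem _ _ h2) (Submodule.smul_mem _ _ h3)
    | zero => rw [pushRot_zero]; exact zero_mem _
    | add V W _ _ hV hW => rw [pushRot_add]; exact add_mem hV hW
    | smul r V _ hV => rw [pushRot_smul]; exact Submodule.smul_mem _ _ hV
  · -- Z2 part
    have e : pushRot α β (a • u2basis 4 + (b • u2basis 5 + (c • u2basis 6 + d • u2basis 7)))
        = (a * Real.cos α + b * Real.sin α) • u2basis 4
          + ((b * Real.cos α - a * Real.sin α) • u2basis 5
          + ((c * Real.cos β + d * Real.sin β) • u2basis 6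
          + (d * Real.cos β - c * Real.sin β) • u2basis 7)) := by
      rw [pushRot_smul_add, pushRot_smul_add, pushRot_smul_add, pushRot_smul,
        pushRot_u4, pushRot_u5, pushRot_u6, pushRot_u7]
      module
    have h5 : b * Real.cos α - a * Real.sin α = 0 := by linear_combination -hα
    have h6 : c * Real.cos β + d * Real.sin β = 0 := by linear_combination hβ
    rw [e, h5, h6]
    simp only [zero_smul, zero_add]
    exact add_mem
      (Submodule.smul_mem _ _ (Submodule.subset_span (by simp)))
      (Submodule.smul_mem _ _ (Submodule.subset_span (by simp)))

end
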